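/- arXiv:2407.08116 — 4 statements merged into one kernel-verified Lean document; each statement's English description precedes it below -/
import Mathlib

section
/- Let G be the group presented by generators a, b, c with relations a² = b² = c² = 1, (abc)² = 1, (ab)³ = (ac)³ = 1. Then G has order 18. -/
namespace Stmt1

/-- The free-group generators `a, b, c`. -/
private def a : FreeGroup (Fin 3) := FreeGroup.of 0
private def b : FreeGroup (Fin 3) := FreeGroup.of 1
private def c : FreeGroup (Fin 3) := FreeGroup.of 2

/-- Relators: `a² = b² = c² = 1`, `(abc)² = 1`, `(ab)³ = (ac)³ = 1`. -/
def rels : Set (FreeGroup (Fin 3)) :=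
  {a ^ 2, b ^ 2, c ^ 2, (a * b * c) ^ 2, (a * b) ^ 3, (a * c) ^ 3}

/-! ### A concrete group of order 18: `(ZMod 3 × ZMod 3) ⋊ ZMod 2` with inverting action. -/

def H : Type := (ZMod 3 × ZMod 3) × ZMod 2

instance : DecidableEq H := inferInstanceAs (DecidableEq ((ZMod 3 × ZMod 3) × ZMod 2))
instance : Fintype H := inferInstanceAs (Fintype ((ZMod 3 × ZMod 3) × ZMod 2))

instance : Mul H := ⟨fun p q => (p.1 + (if p.2 = 0 then q.1 else -q.1), p.2 + q.2)⟩
instance : One H := ⟨((0, 0), 0)⟩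
instance : Inv H := ⟨fun p => ((if p.2 = 0 then -p.1 else p.1), p.2)⟩

set_option maxHeartbeats 1000000 in
instance : Group H :=
  Group.ofLeftAxioms (by decide) (by decide) (by decide)

/-! ### Basic relations in the presented group -/

private def A : PresentedGroup rels := PresentedGroup.of 0
private def B : PresentedGroup rels := PresentedGroup.of 1
private def C : PresentedGroup rels := PresentedGroup.of 2
private def X : PresentedGroup rels := A * B
private def Y : PresentedGroup rels := A * C

lemma rel_one {r : FreeGroup (Fin 3)} (h : r ∈ rels) :
    PresentedGroup.mk rels r = 1 :=
  (QuotientGroup.eq_one_iff r).mpr (Subgroup.subset_normalClosure h)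

lemma hA2 : A * A = 1 := by
  have := rel_one (show a ^ 2 ∈ rels from Or.inl rfl)
  simpa [a, sq, A, PresentedGroup.of] using this

lemma hB2 : B * B = 1 := by
  have := rel_one (show b ^ 2 ∈ rels from Or.inr (Or.inl rfl))
  simpa [b, sq, B, PresentedGroup.of] using this

lemma hC2 : C * C = 1 := by
  have := rel_one (show c ^ 2 ∈ rels from Or.inr (Or.inr (Or.inl rfl)))
  simpa [c, sq, C, PresentedGroup.of] using this

lemma hABC2 : (A * B * C) * (A * B * C) = 1 := by
  have := rel_one (show (a * b * c) ^ 2 ∈ rels from Or.inr (Or.inr (Or.inr (Or.inl rfl))))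
  simpa [a, b, c, sq, A, B, C, PresentedGroup.of] using this

lemma hX3 : X * X * X = 1 := by
  have := rel_one (show (a * b) ^ 3 ∈ rels from
    Or.inr (Or.inr (Or.inr (Or.inr (Or.inl rfl)))))
  simpa [a, b, A, B, X, PresentedGroup.of, pow_succ, mul_assoc] using this

lemma hY3 : Y * Y * Y = 1 := by
  have := rel_one (show (a * c) ^ 3 ∈ rels from
    Or.inr (Or.inr (Or.inr (Or.inr (Or.inr rfl)))))
  simpa [a, c, A, C, Y, PresentedGroup.of, pow_succ, mul_assoc] using this

lemma hAinv : A⁻¹ = A := inv_eq_of_mul_eq_one_right hA2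
lemma hBinv : B⁻¹ = B := inv_eq_of_mul_eq_one_right hB2
lemma hCinv : C⁻¹ = C := inv_eq_of_mul_eq_one_right hC2

/-- `CAB = BAC`, the key commutation consequence of `(abc)² = 1`. -/
lemma hCAB : C * A * B = B * A * C := by
  have h1 : (C * A * B) * (C * A * B) = C * ((A * B * C) * (A * B * C)) * C⁻¹ := by group
  rw [hABC2, mul_one, hCinv, hC2] at h1
  have h2 : C * A * B = (C * A * B)⁻¹ := eq_inv_of_mul_eq_one_left h1
  rw [h2, mul_inv_rev, mul_inv_rev, hAinv, hBinv, hCinv, mul_assoc]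

lemma hcomm : Y * X = X * Y := by
  calc Y * X = A * (C * A * B) := by rw [X, Y]; group
    _ = A * (B * A * C) := by rw [hCAB]
    _ = X * Y := by rw [X, Y]; group

lemma hBeq : B = X * X * A := by
  have h : (X * X * A) * B = 1 := by
    calc (X * X * A) * B = X * X * X := by rw [X]; group
      _ = 1 := hX3
  have := eq_inv_of_mul_eq_one_left h
  rw [this, hBinv]

lemma hCeq : C = Y * Y * A := by
  have h : (Y * Y * A) * C = 1 := by
    calc (Y * Y * A) * C = Y * Y * Y := by rw [Y]; group
      _ = 1 := hY3
  have := eq_inv_of_mul_eq_one_left h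
  rw [this, hCinv]

lemma pow_mod3 {G : Type*} [Group G] {g : G} (h : g * g * g = 1) (n : ℕ) :
    g ^ n = g ^ (n % 3) := by
  have h3 : g ^ 3 = 1 := by rw [pow_succ, pow_succ, pow_one]; exact h
  conv_lhs => rw [← Nat.div_add_mod n 3]
  rw [pow_add, pow_mul, h3, one_pow, one_mul]

lemma pow_mod2 {G : Type*} [Group G] {g : G} (h : g * g = 1) (n : ℕ) :
    g ^ n = g ^ (n % 2) := by
  have h2 : g ^ 2 = 1 := by rw [pow_two]; exact h
  conv_lhs => rw [← Nat.div_add_mod n 2]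
  rw [pow_add, pow_mul, h2, one_pow, one_mul]

/-! ### The 18 normal forms -/

private def f (i j : ZMod 3) (k : ZMod 2) : PresentedGroup rels :=
  X ^ i.val * Y ^ j.val * A ^ k.val

lemma mul_A (i j : ZMod 3) (k : ZMod 2) : f i j k * A = f i j (k + 1) := by
  unfold f
  rw [mul_assoc, ← pow_succ]
  congr 1
  rw [pow_mod2 hA2 (k.val + 1), ZMod.val_add]
  rfl

lemma commXY : Commute X Y := hcomm.symm

lemma mul_B (i j : ZMod 3) (k : ZMod 2) : f i j k * B = f (i + 2 - k.val) j (k + 1) := by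
  unfold f
  fin_cases k
  · show X ^ i.val * Y ^ j.val * A ^ 0 * B = X ^ (i + 2 - 0).val * Y ^ j.val * A ^ (0 + 1 : ZMod 2).val
    rw [sub_zero]
    have hv : (i + 2 : ZMod 3).val = (i.val + 2) % 3 := by
      rw [ZMod.val_add]; rfl
    rw [hv, ← pow_mod3 hX3, show (0 + 1 : ZMod 2).val = 1 from rfl, pow_zero, mul_one,
      pow_one, hBeq, pow_add]
    have hc := (commXY.pow_left 2).pow_right j.val
    calc X ^ i.val * Y ^ j.val * (X * X * A)
        = X ^ i.val * (Y ^ j.val * X ^ 2) * A := by rw [pow_two]; group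
      _ = X ^ i.val * (X ^ 2 * Y ^ j.val) * A := by rw [hc]
      _ = X ^ i.val * X ^ 2 * Y ^ j.val * A := by group
  · show X ^ i.val * Y ^ j.val * A ^ 1 * B = X ^ (i + 2 - 1).val * Y ^ j.val * A ^ (1 + 1 : ZMod 2).val
    have h21 : (2 - 1 : ZMod 3) = 1 := by decide
    rw [show i + 2 - 1 = i + 1 by rw [add_sub_assoc, h21],
      show (1 + 1 : ZMod 2).val = 0 from rfl]
    have hv : (i + 1 : ZMod 3).val = (i.val + 1) % 3 := by
      rw [ZMod.val_add]; rfl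
    rw [hv, ← pow_mod3 hX3, pow_zero, mul_one, pow_one, pow_add, pow_one]
    have hc := commXY.pow_right j.val
    calc X ^ i.val * Y ^ j.val * A * B
        = X ^ i.val * (Y ^ j.val * X) := by rw [X]; group
      _ = X ^ i.val * (X * Y ^ j.val) := by rw [hc]
      _ = X ^ i.val * X * Y ^ j.val := by group

lemma mul_C (i j : ZMod 3) (k : ZMod 2) : f i j k * C = f i (j + 2 - k.val) (k + 1) := by
  unfold f
  fin_cases k
  · show X ^ i.val * Y ^ j.val * A ^ 0 * C = X ^ i.val * Y ^ (j + 2 - 0).val * A ^ (0 + 1 : ZMod 2).val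
    rw [sub_zero]
    have hv : (j + 2 : ZMod 3).val = (j.val + 2) % 3 := by
      rw [ZMod.val_add]; rfl
    rw [hv, ← pow_mod3 hY3, show (0 + 1 : ZMod 2).val = 1 from rfl, pow_zero, mul_one,
      pow_one, hCeq, pow_add]
    group
  · show X ^ i.val * Y ^ j.val * A ^ 1 * C = X ^ i.val * Y ^ (j + 2 - 1).val * A ^ (1 + 1 : ZMod 2).val
    have h21 : (2 - 1 : ZMod 3) = 1 := by decide
    rw [show j + 2 - 1 = j + 1 by rw [add_sub_assoc, h21],
      show (1 + 1 : ZMod 2).val = 0 from rfl]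
    have hv : (j + 1 : ZMod 3).val = (j.val + 1) % 3 := by
      rw [ZMod.val_add]; rfl
    rw [hv, ← pow_mod3 hY3, pow_zero, mul_one, pow_one, pow_add, pow_one]
    calc X ^ i.val * Y ^ j.val * A * C
        = X ^ i.val * (Y ^ j.val * Y) := by rw [Y]; group

/-! ### Surjectivity of the normal forms -/

lemma f_surj (p : PresentedGroup rels) : ∃ i j k, f i j k = p := by
  have hmem : p ∈ Subgroup.closure (Set.range (PresentedGroup.of : Fin 3 → PresentedGroup rels)) := by
    rw [PresentedGroup.closure_range_of]; trivial
  induction hmem using Subgroup.closure_induction_right with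
  | one => exact ⟨0, 0, 0, by simp [f]⟩
  | mul_right x hx y hy ih =>
    obtain ⟨i, j, k, rfl⟩ := ih
    obtain ⟨t, rfl⟩ := hy
    fin_cases t
    · exact ⟨i, j, k + 1, (mul_A i j k).symm⟩
    · exact ⟨i + 2 - k.val, j, k + 1, (mul_B i j k).symm⟩
    · exact ⟨i, j + 2 - k.val, k + 1, (mul_C i j k).symm⟩
  | mul_inv_cancel x hx y hy ih =>
    obtain ⟨i, j, k, rfl⟩ := ih
    obtain ⟨t, rfl⟩ := hy
    fin_cases t
    · refine ⟨i, j, k + 1, ?_⟩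
      show f i j (k + 1) = f i j k * A⁻¹
      rw [hAinv]; exact (mul_A i j k).symm
    · refine ⟨i + 2 - k.val, j, k + 1, ?_⟩
      show f (i + 2 - k.val) j (k + 1) = f i j k * B⁻¹
      rw [hBinv]; exact (mul_B i j k).symm
    · refine ⟨i, j + 2 - k.val, k + 1, ?_⟩
      show f i (j + 2 - k.val) (k + 1) = f i j k * C⁻¹
      rw [hCinv]; exact (mul_C i j k).symm

/-! ### The homomorphism to `H` and injectivity -/

private def hgen : Fin 3 → H := ![((0, 0), 1), ((1, 0), 1), ((0, 1), 1)]

lemma hrels : ∀ r ∈ rels, FreeGroup.lift hgen r = 1 := by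
  intro r hr
  rcases hr with rfl | rfl | rfl | rfl | rfl | rfl <;>
    · simp only [a, b, c, map_pow, map_mul, FreeGroup.lift_apply_of]
      decide

private def φ : PresentedGroup rels →* H := PresentedGroup.toGroup hrels

lemma φ_f (i j : ZMod 3) (k : ZMod 2) :
    φ (f i j k) = (hgen 0 * hgen 1) ^ i.val * (hgen 0 * hgen 2) ^ j.val * (hgen 0) ^ k.val := by
  simp only [f, map_mul, map_pow, X, Y, A, B, C, φ, PresentedGroup.toGroup.of]

lemma g_inj : Function.Injective
    (fun t : ZMod 3 × ZMod 3 × ZMod 2 =>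
      (hgen 0 * hgen 1) ^ t.1.val * (hgen 0 * hgen 2) ^ t.2.1.val * (hgen 0) ^ t.2.2.val) := by
  decide

lemma f_inj : Function.Injective
    (fun t : ZMod 3 × ZMod 3 × ZMod 2 => f t.1 t.2.1 t.2.2) := by
  intro s t h
  apply g_inj
  simp only [← φ_f]
  exact congrArg φ h

theorem card_presented_eq_18 : Nat.card (PresentedGroup rels) = 18 := by
  have hbij : Function.Bijective
      (fun t : ZMod 3 × ZMod 3 × ZMod 2 => f t.1 t.2.1 t.2.2) := by
    refine ⟨f_inj, fun p => ?_⟩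
    obtain ⟨i, j, k, hk⟩ := f_surj p
    exact ⟨(i, j, k), hk⟩
  rw [← Nat.card_eq_of_bijective _ hbij, Nat.card_eq_fintype_card]
  rfl

end Stmt1
end

section
/- Let G be a nonabelian group of order 18 isomorphic to (C₃ × C₃) ⋊ C₂ with C₂ acting by inversion. Then the Schur multiplier H²(G, ℂˣ) of G is isomorphic to ℤ/3ℤ. -/
/-- The group of 2-cocycles on `G` with values in `ℂˣ` (trivial action). -/
def twoCocycles (G : Type*) [Group G] : Subgroup (G → G → ℂˣ) where
  carrier := {f | ∀ g h k, f g h * f (g * h) k = f g (h * k) * f h k}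
  one_mem' := by intro g h k; simp
  mul_mem' := by
    intro f₁ f₂ h1 h2 g h k
    simp only [Pi.mul_apply]
    rw [mul_mul_mul_comm, h1 g h k, h2 g h k, mul_mul_mul_comm]
  inv_mem' := by
    intro f hf g h k
    simp only [Pi.inv_apply]
    rw [← mul_inv, hf g h k, mul_inv]

/-- The group of 2-coboundaries on `G` with values in `ℂˣ` (trivial action). -/
def twoCoboundaries (G : Type*) [Group G] : Subgroup (G → G → ℂˣ) where
  carrier := {f | ∃ c : G → ℂˣ, ∀ g h, f g h = c g * c h * (c (g * h))⁻¹}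
  one_mem' := ⟨fun _ => 1, by simp⟩
  mul_mem' := by
    rintro f₁ f₂ ⟨c₁, h1⟩ ⟨c₂, h2⟩
    refine ⟨c₁ * c₂, fun g h => ?_⟩
    simp only [Pi.mul_apply, h1 g h, h2 g h, mul_inv]
    simp [mul_assoc, mul_comm, mul_left_comm]
  inv_mem' := by
    rintro f ⟨c, hc⟩
    refine ⟨c⁻¹, fun g h => ?_⟩
    simp only [Pi.inv_apply, hc g h, mul_inv, inv_inv]

/-- The Schur multiplier `H²(G, ℂˣ)` (with trivial `G`-action on `ℂˣ`):
2-cocycles modulo 2-coboundaries. -/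
def schurMultiplier (G : Type*) [Group G] :=
  twoCocycles G ⧸ ((twoCoboundaries G).subgroupOf (twoCocycles G))

instance (G : Type*) [Group G] : CommGroup (schurMultiplier G) :=
  QuotientGroup.Quotient.commGroup _

abbrev C3 := Multiplicative (ZMod 3)
abbrev C2 := Multiplicative (ZMod 2)

/-!
For commuting `g, h` and a 2-cocycle `f`, the ratio `f g h / f h g` is the commutator of lifts of
`g` and `h` to the central extension defined by `f`; it is multiplicative in `f`, trivial on
coboundaries, and a character in `h`. On `(C₃ × C₃) ⋊ C₂` with generators `a, b` of `C₃ × C₃` and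
`t` of `C₂`, its value at `(a, b)` is therefore a homomorphism from the Schur multiplier to the
cube roots of unity. It is injective: when it vanishes, lifts of `a, b, t` can be corrected by
central factors (roots exist in `ℂˣ`) to satisfy the defining relations `a³ = b³ = t² = 1`,
`ab = ba`, `tat⁻¹ = a⁻¹`, `tbt⁻¹ = b⁻¹`, which yields a splitting of the extension. It is also
nontrivial, on the cocycle `χ(m₁ (ε • m')₂)` for a faithful character `χ` of `ZMod 3`.
-/

section Cocycles

variable {G : Type*}

def commPairing (f : G → G → ℂˣ) (g h : G) : ℂˣ := f g h / f h g

theorem commPairing_mul (f₁ f₂ : G → G → ℂˣ) (g h : G) :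
    commPairing (f₁ * f₂) g h = commPairing f₁ g h * commPairing f₂ g h :=
  mul_div_mul_comm _ _ _ _

variable [Group G] {f : G → G → ℂˣ}

namespace twoCocycles

theorem apply_one_right (hf : f ∈ twoCocycles G) (g : G) : f g 1 = f 1 1 := by
  simpa using hf g 1 1

theorem apply_one_left (hf : f ∈ twoCocycles G) (g : G) : f 1 g = f 1 1 := by
  simpa using (hf 1 1 g).symm

end twoCocycles

theorem commPairing_one_right (hf : f ∈ twoCocycles G) (g : G) : commPairing f g 1 = 1 := by
  rw [commPairing, twoCocycles.apply_one_right hf, twoCocycles.apply_one_left hf g, div_self']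

theorem commPairing_mul_right (hf : f ∈ twoCocycles G) {g h k : G} (hgh : Commute g h)
    (hgk : Commute g k) : commPairing f g (h * k) = commPairing f g h * commPairing f g k := by
  have e₃ := hf h g k
  rw [← hgh.eq, hgk.eq] at e₃
  rw [commPairing, commPairing, commPairing, div_mul_div_comm, div_eq_div_iff_mul_eq_mul]
  refine mul_right_cancel (b := f h k) ?_
  calc f g (h * k) * (f h g * f k g) * f h k
      = f g (h * k) * f h k * f h g * f k g := by ac_rfl
    _ = f g h * (f h g * f (g * h) k) * f k g := by rw [← hf g h k]; ac_rfl
    _ = f g h * f g k * (f h (k * g) * f k g) := by rw [e₃]; ac_rfl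
    _ = f g h * f g k * f (h * k) g * f h k := by rw [← hf h k g]; ac_rfl

theorem commPairing_pow_right (hf : f ∈ twoCocycles G) {g h : G} (hgh : Commute g h) (n : ℕ) :
    commPairing f g (h ^ n) = commPairing f g h ^ n := by
  induction n with
  | zero => simpa using commPairing_one_right hf g
  | succ n ih => rw [pow_succ, commPairing_mul_right hf (hgh.pow_right n) hgh, ih, pow_succ]

theorem commPairing_eq_one_of_mem_twoCoboundaries (hf : f ∈ twoCoboundaries G) {g h : G}
    (hgh : Commute g h) : commPairing f g h = 1 := by
  obtain ⟨c, hc⟩ := hf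
  rw [commPairing, hc, hc, hgh.eq, mul_comm (c g), div_self']

def schurMultiplier.commPairingHom {g h : G} (hgh : Commute g h) : schurMultiplier G →* ℂˣ :=
  QuotientGroup.lift _
    { toFun := fun f => commPairing f.1 g h
      map_one' := div_self' _
      map_mul' := fun f₁ f₂ => commPairing_mul f₁.1 f₂.1 g h }
    fun _ hf => commPairing_eq_one_of_mem_twoCoboundaries (Subgroup.mem_subgroupOf.mp hf) hgh

theorem schurMultiplier.commPairingHom_mk {g h : G} (hgh : Commute g h) (f : twoCocycles G) :
    commPairingHom hgh (QuotientGroup.mk f) = commPairing f.1 g h := rfl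

theorem schurMultiplier.commPairingHom_pow_eq_one {g h : G} (hgh : Commute g h) {n : ℕ}
    (hn : h ^ n = 1) (q : schurMultiplier G) : commPairingHom hgh q ^ n = 1 := by
  induction q using QuotientGroup.induction_on with
  | H f => rw [commPairingHom_mk, ← commPairing_pow_right f.2 hgh, hn, commPairing_one_right f.2]

end Cocycles

/-- The central extension `1 → ℂˣ → E → G → 1` classified by a 2-cocycle `f`; its identity is
`((f 1 1)⁻¹, 1)` since `f` need not be normalized. -/
@[ext]
structure CocycleExt {G : Type*} [Group G] (f : twoCocycles G) where
  scalar : ℂˣ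
  base : G

namespace CocycleExt

variable {G : Type*} [Group G] {f : twoCocycles G}

instance : Mul (CocycleExt f) :=
  ⟨fun a b => ⟨a.scalar * b.scalar * f.1 a.base b.base, a.base * b.base⟩⟩
instance : One (CocycleExt f) := ⟨⟨(f.1 1 1)⁻¹, 1⟩⟩
instance : Inv (CocycleExt f) :=
  ⟨fun a => ⟨(a.scalar * f.1 a.base⁻¹ a.base * f.1 1 1)⁻¹, a.base⁻¹⟩⟩

@[simp] theorem mul_scalar (a b : CocycleExt f) :
    (a * b).scalar = a.scalar * b.scalar * f.1 a.base b.base := rfl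
@[simp] theorem mul_base (a b : CocycleExt f) : (a * b).base = a.base * b.base := rfl
@[simp] theorem one_scalar : (1 : CocycleExt f).scalar = (f.1 1 1)⁻¹ := rfl
@[simp] theorem one_base : (1 : CocycleExt f).base = 1 := rfl
@[simp] theorem inv_scalar (a : CocycleExt f) :
    a⁻¹.scalar = (a.scalar * f.1 a.base⁻¹ a.base * f.1 1 1)⁻¹ := rfl
@[simp] theorem inv_base (a : CocycleExt f) : a⁻¹.base = a.base⁻¹ := rfl

instance : Group (CocycleExt f) where
  mul_assoc a b c := by
    refine CocycleExt.ext ?_ (mul_assoc _ _ _)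
    calc a.scalar * b.scalar * f.1 a.base b.base * c.scalar * f.1 (a.base * b.base) c.base
        = a.scalar * b.scalar * c.scalar * (f.1 a.base b.base * f.1 (a.base * b.base) c.base) := by
          ac_rfl
      _ = a.scalar * (b.scalar * c.scalar * f.1 b.base c.base) * f.1 a.base (b.base * c.base) := by
          rw [f.2]; ac_rfl
  one_mul a := CocycleExt.ext (by simp [twoCocycles.apply_one_left f.2]) (one_mul _)
  mul_one a := CocycleExt.ext (by simp [twoCocycles.apply_one_right f.2]) (mul_one _)
  inv_mul_cancel a :=
    CocycleExt.ext (by simp only [mul_scalar, inv_scalar, inv_base, one_scalar]; group)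
      (inv_mul_cancel _)

def proj (f : twoCocycles G) : CocycleExt f →* G where
  toFun := base
  map_one' := rfl
  map_mul' _ _ := rfl

@[simp] theorem proj_apply (a : CocycleExt f) : proj f a = a.base := rfl

def ofScalar (f : twoCocycles G) : ℂˣ →* CocycleExt f where
  toFun w := ⟨w * (f.1 1 1)⁻¹, 1⟩
  map_one' := CocycleExt.ext (one_mul _) rfl
  map_mul' w v := CocycleExt.ext (by simp [mul_comm, mul_left_comm, mul_assoc]) (mul_one 1).symm

theorem commute_ofScalar (w : ℂˣ) (a : CocycleExt f) : Commute (ofScalar f w) a := by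
  refine CocycleExt.ext ?_ ((one_mul _).trans (mul_one _).symm)
  simp [ofScalar, twoCocycles.apply_one_left f.2, twoCocycles.apply_one_right f.2, mul_comm]

theorem eq_ofScalar_of_proj_eq_one {a : CocycleExt f} (ha : proj f a = 1) :
    a = ofScalar f (a.scalar * f.1 1 1) :=
  CocycleExt.ext (by simp [ofScalar]) ha

theorem commute_of_proj_eq_one {a : CocycleExt f} (ha : proj f a = 1) (b : CocycleExt f) :
    Commute a b := by
  rw [eq_ofScalar_of_proj_eq_one ha]
  exact commute_ofScalar _ b

end CocycleExt

theorem Complex.exists_units_pow_eq (w : ℂˣ) {n : ℕ} (hn : n ≠ 0) : ∃ v : ℂˣ, v ^ n = w := by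
  obtain ⟨z, hz⟩ := IsAlgClosed.exists_pow_nat_eq (w : ℂ) (Nat.pos_of_ne_zero hn)
  have hz₀ : z ≠ 0 := by
    rintro rfl
    exact w.ne_zero (by rw [← hz, zero_pow hn])
  exact ⟨Units.mk0 z hz₀, Units.ext (by simpa using hz)⟩

theorem conj_mul_eq_inv_of_conj_eq_mul_inv {E : Type*} [Group E] {t a w : E} (ha : a ^ 3 = 1)
    (hw : t * a * t⁻¹ = w * a⁻¹) (hwa : Commute w a) (hwt : Commute w t) :
    (w * a) ^ 3 = 1 ∧ t * (w * a) * t⁻¹ = (w * a)⁻¹ := by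
  have hw3 : w ^ 3 = 1 := by
    have h : (t * a * t⁻¹) ^ 3 = 1 := by rw [conj_pow, ha, mul_one, mul_inv_cancel]
    rwa [hw, hwa.inv_right.mul_pow, inv_pow, ha, inv_one, mul_one] at h
  refine ⟨by rw [hwa.mul_pow, hw3, ha, one_mul], ?_⟩
  calc t * (w * a) * t⁻¹ = w * (t * a * t⁻¹) := by rw [← mul_assoc, ← hwt.eq]; group
    _ = w * w * a⁻¹ := by rw [hw, mul_assoc]
    _ = (w * a)⁻¹ := by
      have hww : w * w = w⁻¹ := eq_inv_of_mul_eq_one_left (by rw [← pow_three', hw3])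
      rw [mul_inv_rev, ← hwa.inv_inv.eq, hww]

namespace CocycleExt

variable {G : Type*} [Group G] {f : twoCocycles G}

theorem exists_lift_pow_eq_one {g : G} {n : ℕ} (hn : n ≠ 0) (hg : g ^ n = 1) :
    ∃ a : CocycleExt f, proj f a = g ∧ a ^ n = 1 := by
  let a₀ : CocycleExt f := ⟨1, g⟩
  obtain ⟨w, hw⟩ : ∃ w, a₀ ^ n = ofScalar f w :=
    ⟨_, eq_ofScalar_of_proj_eq_one (by rw [map_pow]; exact hg)⟩
  obtain ⟨v, hv⟩ := Complex.exists_units_pow_eq w⁻¹ hn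
  refine ⟨ofScalar f v * a₀, by simp [ofScalar, a₀], ?_⟩
  rw [(commute_ofScalar v a₀).mul_pow, ← map_pow, hv, hw, ← map_mul, inv_mul_cancel, map_one]

theorem exists_lift_conj_eq_inv {t a : CocycleExt f} (ha : a ^ 3 = 1)
    (hta : proj f (t * a * t⁻¹) = (proj f a)⁻¹) :
    ∃ a' : CocycleExt f, proj f a' = proj f a ∧ a' ^ 3 = 1 ∧ t * a' * t⁻¹ = a'⁻¹ := by
  set w := t * a * t⁻¹ * a
  have hw : proj f w = 1 := by rw [map_mul, hta, inv_mul_cancel]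
  have h := conj_mul_eq_inv_of_conj_eq_mul_inv ha (by simp [w])
    (commute_of_proj_eq_one hw a) (commute_of_proj_eq_one hw t)
  exact ⟨w * a, by rw [map_mul, hw, one_mul], h⟩

theorem commute_of_commPairing_eq_one {a b : CocycleExt f}
    (hab : Commute (proj f a) (proj f b)) (h : commPairing f.1 (proj f a) (proj f b) = 1) :
    Commute a b :=
  CocycleExt.ext (by simpa [mul_comm a.scalar] using div_eq_one.mp h) hab.eq

theorem mem_twoCoboundaries_of_section (s : G →* CocycleExt f)
    (hs : (proj f).comp s = MonoidHom.id G) : f.1 ∈ twoCoboundaries G := by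
  have hbase : ∀ g, (s g).base = g := DFunLike.congr_fun hs
  refine ⟨fun g => (s g).scalar⁻¹, fun g h => ?_⟩
  simp only [map_mul, mul_scalar, hbase]
  rw [inv_inv, ← mul_inv, inv_mul_cancel_left]

end CocycleExt

open Multiplicative SemidirectProduct

theorem Multiplicative.ofAdd_one_pow_val {n : ℕ} [NeZero n] (v : ZMod n) :
    ofAdd (1 : ZMod n) ^ v.val = ofAdd v := by
  rw [← ofAdd_nsmul, nsmul_one, ZMod.natCast_zmod_val]

def zmodPowHom {E : Type*} [Monoid E] {n : ℕ} [NeZero n] {x : E} (hx : x ^ n = 1) :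
    Multiplicative (ZMod n) →* E where
  toFun m := x ^ (toAdd m).val
  map_one' := by simp
  map_mul' a b := by rw [toAdd_mul, ZMod.val_add, ← pow_eq_pow_mod _ hx, pow_add]

@[simp] theorem zmodPowHom_ofAdd_one {E : Type*} [Monoid E] {n : ℕ} [NeZero n] [Fact (1 < n)]
    {x : E} (hx : x ^ n = 1) : zmodPowHom hx (ofAdd 1) = x := by
  simp [zmodPowHom, ZMod.val_one]

theorem C2_eq_one_or_eq_ofAdd_one (ε : C2) : ε = 1 ∨ ε = ofAdd 1 := by
  revert ε; decide

section Presentation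

variable (φ : C2 →* MulAut (C3 × C3))

def genA : (C3 × C3) ⋊[φ] C2 := inl (ofAdd 1, 1)

def genB : (C3 × C3) ⋊[φ] C2 := inl (1, ofAdd 1)

def genT : (C3 × C3) ⋊[φ] C2 := inr (ofAdd 1)

theorem genA_pow_three : genA φ ^ 3 = 1 := by
  rw [genA, ← map_pow]; exact congrArg inl (by decide)

theorem genB_pow_three : genB φ ^ 3 = 1 := by
  rw [genB, ← map_pow]; exact congrArg inl (by decide)

theorem genT_sq : genT φ ^ 2 = 1 := by
  rw [genT, ← map_pow]; exact congrArg inr (by decide)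

theorem commute_genA_genB : Commute (genA φ) (genB φ) := (Commute.all _ _).map inl

theorem inl_eq_genA_pow_mul_genB_pow (m : C3 × C3) :
    inl m = genA φ ^ (toAdd m.1).val * genB φ ^ (toAdd m.2).val := by
  rw [genA, genB, ← map_pow, ← map_pow, ← map_mul]
  congr 1
  ext <;> simp [ofAdd_one_pow_val]

theorem inr_eq_genT_pow (ε : C2) : inr ε = genT φ ^ (toAdd ε).val := by
  rw [genT, ← map_pow, ofAdd_one_pow_val, ofAdd_toAdd]

variable {φ}

theorem genT_conj_inl (hφ : ∀ m : C3 × C3, φ (ofAdd 1) m = m⁻¹) (m : C3 × C3) :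
    genT φ * inl m * (genT φ)⁻¹ = (inl m)⁻¹ := by
  rw [genT, ← map_inv, ← inl_aut, hφ, map_inv]

theorem hom_ext_gens {E : Type*} [Group E] {F₁ F₂ : (C3 × C3) ⋊[φ] C2 →* E}
    (hA : F₁ (genA φ) = F₂ (genA φ)) (hB : F₁ (genB φ) = F₂ (genB φ))
    (hT : F₁ (genT φ) = F₂ (genT φ)) : F₁ = F₂ := by
  refine SemidirectProduct.hom_ext (MonoidHom.ext fun m => ?_) (MonoidHom.ext fun ε => ?_)
  · simp only [MonoidHom.comp_apply, inl_eq_genA_pow_mul_genB_pow, map_mul, map_pow, hA, hB]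
  · simp only [MonoidHom.comp_apply, inr_eq_genT_pow, map_pow, hT]

theorem exists_hom_of_relations (hφ : ∀ m : C3 × C3, φ (ofAdd 1) m = m⁻¹) {E : Type*}
    [Group E] {a b t : E} (ha : a ^ 3 = 1) (hb : b ^ 3 = 1) (ht : t ^ 2 = 1) (hab : Commute a b)
    (hta : t * a * t⁻¹ = a⁻¹) (htb : t * b * t⁻¹ = b⁻¹) :
    ∃ F : (C3 × C3) ⋊[φ] C2 →* E, F (genA φ) = a ∧ F (genB φ) = b ∧ F (genT φ) = t := by
  let ψ : C3 × C3 →* E :=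
    (zmodPowHom ha).noncommCoprod (zmodPowHom hb) fun _ _ => hab.pow_pow _ _
  have hψ_apply (m : C3 × C3) : ψ m = a ^ (toAdd m.1).val * b ^ (toAdd m.2).val := rfl
  have hψ_conj (m : C3 × C3) : t * ψ m * t⁻¹ = (ψ m)⁻¹ := by
    calc t * ψ m * t⁻¹
        = (t * a * t⁻¹) ^ (toAdd m.1).val * (t * b * t⁻¹) ^ (toAdd m.2).val := by
          rw [conj_pow, conj_pow, hψ_apply]; group
      _ = (ψ m)⁻¹ := by
          rw [hta, htb, inv_pow, inv_pow, ← mul_inv_rev, ← (hab.pow_pow _ _).eq, hψ_apply]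
  have compat (ε : C2) :
      ψ.comp (φ ε).toMonoidHom = (MulAut.conj (zmodPowHom ht ε)).toMonoidHom.comp ψ := by
    refine MonoidHom.ext fun m => ?_
    rcases C2_eq_one_or_eq_ofAdd_one ε with rfl | rfl
    · simp
    · simp [hφ, hψ_conj]
  refine ⟨SemidirectProduct.lift ψ (zmodPowHom ht) compat, ?_, ?_, ?_⟩ <;>
    simp [genA, genB, genT, hψ_apply, ZMod.val_one]

end Presentation

section Transport

variable {G H : Type*} [Group G] [Group H]

theorem comp_mem_twoCocycles (e : G →* H) {f : H → H → ℂˣ} (hf : f ∈ twoCocycles H) :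
    (fun g g' => f (e g) (e g')) ∈ twoCocycles G := fun g h k => by
  simpa only [map_mul] using hf (e g) (e h) (e k)

theorem comp_mem_twoCoboundaries (e : G →* H) {f : H → H → ℂˣ} (hf : f ∈ twoCoboundaries H) :
    (fun g g' => f (e g) (e g')) ∈ twoCoboundaries G := by
  obtain ⟨c, hc⟩ := hf
  exact ⟨fun g => c (e g), fun g g' => by simp only [hc, map_mul]⟩

@[simps]
def twoCocycles.congr (e : G ≃* H) : twoCocycles H ≃* twoCocycles G where
  toFun f := ⟨_, comp_mem_twoCocycles e.toMonoidHom f.2⟩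
  invFun f := ⟨_, comp_mem_twoCocycles e.symm.toMonoidHom f.2⟩
  left_inv f := by ext; simp
  right_inv f := by ext; simp
  map_mul' _ _ := rfl

def schurMultiplier.congr (e : G ≃* H) : schurMultiplier H ≃* schurMultiplier G :=
  QuotientGroup.congr _ _ (twoCocycles.congr e) <| by
    rw [Subgroup.map_equiv_eq_comap_symm]
    ext f
    rw [Subgroup.mem_comap, Subgroup.mem_subgroupOf, Subgroup.mem_subgroupOf]
    refine ⟨fun hf => ?_, comp_mem_twoCoboundaries e.symm.toMonoidHom⟩
    simpa using comp_mem_twoCoboundaries e.toMonoidHom hf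

end Transport

theorem mem_twoCocycles_semidirectProduct {N H : Type*} [Group N] [Group H] {φ : H →* MulAut N}
    (B : N → N → ℂˣ) (hB₁ : ∀ x y z, B (x * y) z = B x z * B y z)
    (hB₂ : ∀ x y z, B x (y * z) = B x y * B x z) (hBφ : ∀ h x y, B (φ h x) (φ h y) = B x y) :
    (fun g g' : N ⋊[φ] H => B g.left (φ g.right g'.left)) ∈ twoCocycles (N ⋊[φ] H) := by
  intro g h k
  simp only [SemidirectProduct.mul_left, SemidirectProduct.mul_right, map_mul, MulAut.mul_apply,
    hB₁, hB₂, hBφ]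
  ac_rfl

section SchurMultiplierG18

variable {φ : C2 →* MulAut (C3 × C3)}

open CocycleExt in
theorem mem_twoCoboundaries_of_commPairing_eq_one (hφ : ∀ m : C3 × C3, φ (ofAdd 1) m = m⁻¹)
    {f : twoCocycles ((C3 × C3) ⋊[φ] C2)} (h : commPairing f.1 (genA φ) (genB φ) = 1) :
    f.1 ∈ twoCoboundaries ((C3 × C3) ⋊[φ] C2) := by
  obtain ⟨a, ha, ha3⟩ := exists_lift_pow_eq_one (f := f) three_ne_zero (genA_pow_three φ)
  obtain ⟨b, hb, hb3⟩ := exists_lift_pow_eq_one (f := f) three_ne_zero (genB_pow_three φ)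
  obtain ⟨t, ht, ht2⟩ := exists_lift_pow_eq_one (f := f) two_ne_zero (genT_sq φ)
  obtain ⟨a', ha', ha'3, hta'⟩ := exists_lift_conj_eq_inv (t := t) ha3
    (by rw [map_mul, map_mul, map_inv, ht, ha]; exact genT_conj_inl hφ _)
  obtain ⟨b', hb', hb'3, htb'⟩ := exists_lift_conj_eq_inv (t := t) hb3
    (by rw [map_mul, map_mul, map_inv, ht, hb]; exact genT_conj_inl hφ _)
  rw [ha] at ha'
  rw [hb] at hb'
  have hab : Commute a' b' := commute_of_commPairing_eq_one
    (by rw [ha', hb']; exact commute_genA_genB φ) (by rw [ha', hb']; exact h)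
  obtain ⟨s, hsA, hsB, hsT⟩ := exists_hom_of_relations hφ ha'3 hb'3 ht2 hab hta' htb'
  exact mem_twoCoboundaries_of_section s
    (hom_ext_gens (by simp [hsA, ha']) (by simp [hsB, hb']) (by simp [hsT, ht]))

theorem commPairingHom_genA_genB_injective (hφ : ∀ m : C3 × C3, φ (ofAdd 1) m = m⁻¹) :
    Function.Injective (schurMultiplier.commPairingHom (commute_genA_genB φ)) := by
  refine (injective_iff_map_eq_one _).mpr fun q hq => ?_
  induction q using QuotientGroup.induction_on with
  | H f =>
    exact (QuotientGroup.eq_one_iff f).mpr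
      (Subgroup.mem_subgroupOf.mpr (mem_twoCoboundaries_of_commPairing_eq_one hφ hq))

/-- The cocycle `((m, ε), (m', ε')) ↦ χ(m₁ · (ε • m')₂)` for a faithful character `χ` of `ZMod 3`:
the form `(x, y) ↦ x₁ y₂` is invariant under `x ↦ -x`. -/
theorem exists_commPairing_genA_genB_ne_one (hφ : ∀ m : C3 × C3, φ (ofAdd 1) m = m⁻¹) :
    ∃ f : twoCocycles ((C3 × C3) ⋊[φ] C2), commPairing f.1 (genA φ) (genB φ) ≠ 1 := by
  obtain ⟨χ, hχ⟩ := ZMod.exists_monoidHom_apply_ne_one (M := ℂ)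
    ⟨_, Complex.isPrimitiveRoot_exp 3 three_ne_zero⟩ (one_ne_zero : (1 : ZMod 3) ≠ 0)
  let B : C3 × C3 → C3 × C3 → ℂˣ := fun x y => χ (ofAdd (toAdd x.1 * toAdd y.2))
  refine ⟨⟨_, mem_twoCocycles_semidirectProduct B ?_ ?_ ?_⟩, ?_⟩
  · intro x y z
    simp [B, add_mul]
  · intro x y z
    simp [B, mul_add]
  · intro ε x y
    rcases C2_eq_one_or_eq_ofAdd_one ε with rfl | rfl
    · simp
    · simp [B, hφ]
  · simpa [commPairing, genA, genB, B] using hχ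

theorem card_schurMultiplier_eq_three (hφ : ∀ m : C3 × C3, φ (ofAdd 1) m = m⁻¹) :
    Nat.card (schurMultiplier ((C3 × C3) ⋊[φ] C2)) = 3 := by
  let Ψ := (schurMultiplier.commPairingHom (commute_genA_genB φ)).codRestrict
    (rootsOfUnity 3 ℂ) fun q =>
      (mem_rootsOfUnity 3 _).mpr (schurMultiplier.commPairingHom_pow_eq_one _ (genB_pow_three φ) q)
  have hdvd := Subgroup.card_dvd_of_injective Ψ
    fun _ _ h => commPairingHom_genA_genB_injective hφ (congrArg Subtype.val h)
  rw [Complex.card_rootsOfUnity] at hdvd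
  obtain ⟨f, hf⟩ := exists_commPairing_genA_genB_ne_one hφ
  have hne : Nat.card (schurMultiplier ((C3 × C3) ⋊[φ] C2)) ≠ 1 := fun h1 => hf <| by
    rw [← schurMultiplier.commPairingHom_mk (commute_genA_genB φ),
      (Nat.card_eq_one_iff_unique.mp h1).1.elim (QuotientGroup.mk f) 1, map_one]
  exact ((Nat.dvd_prime Nat.prime_three).mp hdvd).resolve_left hne

end SchurMultiplierG18

theorem schurMultiplier_of_G18_general (G : Type*) [Group G]
    (φ : C2 →* MulAut (C3 × C3))
    (hφ : ∀ m : C3 × C3, φ (Multiplicative.ofAdd (1 : ZMod 2)) m = m⁻¹)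
    (hiso : Nonempty (G ≃* (C3 × C3) ⋊[φ] C2)) :
    Nonempty (schurMultiplier G ≃* Multiplicative (ZMod 3)) := by
  obtain ⟨e⟩ := hiso
  have : Fact (Nat.Prime 3) := ⟨Nat.prime_three⟩
  refine ⟨mulEquivOfPrimeCardEq (p := 3) ?_ (by simp)⟩
  rw [← Nat.card_congr (schurMultiplier.congr e).toEquiv]
  exact card_schurMultiplier_eq_three hφ

theorem schurMultiplier_of_G18 (G : Type*) [Group G]
    (hcard : Nat.card G = 18) (hnonab : ∃ x y : G, x * y ≠ y * x)
    (φ : C2 →* MulAut (C3 × C3))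
    (hφ : ∀ m : C3 × C3, φ (Multiplicative.ofAdd (1 : ZMod 2)) m = m⁻¹)
    (hiso : Nonempty (G ≃* (C3 × C3) ⋊[φ] C2)) :
    Nonempty (schurMultiplier G ≃* Multiplicative (ZMod 3)) :=
  schurMultiplier_of_G18_general G φ hφ hiso
end

section
/- Let G be the group presented by generators a, b with relations a³ = b³ = 1, (ab)³ = (a⁻¹b)³ = 1, and set c = [b,a] = b·a·b⁻¹·a⁻¹. Then c³ = 1, the center of G equals ⟨c⟩, b·a·b⁻¹ commutes with a, and a·b·a⁻¹ commutes with b. -/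
/-!
Put `u = y x y⁻¹` and `v = y² x y⁻²`. Then `(x y)³ = x u v y³` and `(x⁻¹ y)³ = x⁻¹ u⁻¹ v⁻¹ y³`,
so the relations `b³ = (a b)³ = (a⁻¹ b)³ = 1` give `v = (a u)⁻¹ = a⁻¹ u⁻¹`, i.e. `u = b a b⁻¹`
commutes with `a`; with the roles of `a` and `b` exchanged, `a b a⁻¹` commutes with `b`. Hence
`c = [b, a]` commutes with both generators, so `bʲ aⁱ = c^{ij} aⁱ bʲ` and every element of `G` is
`cᵏ aⁱ bʲ`. In particular `c³ = [b, a³] = 1`, and `cᵏ aⁱ bʲ` is central iff `cⁱ = cʲ = 1`. The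
Heisenberg group over `ZMod 3` is a quotient of `G` in which `c ≠ 1`, so `c` has order 3, and then
`cⁱ = cʲ = 1` forces `aⁱ = bʲ = 1`.
-/

namespace Stmt10

private def ra : FreeGroup (Fin 2) := FreeGroup.of 0
private def rb : FreeGroup (Fin 2) := FreeGroup.of 1

/-- Relators: `a³ = b³ = 1`, `(ab)³ = 1`, `(a⁻¹b)³ = 1`. -/
def rels : Set (FreeGroup (Fin 2)) :=
  {ra ^ 3, rb ^ 3, (ra * rb) ^ 3, (ra⁻¹ * rb) ^ 3}

abbrev G := PresentedGroup rels

def a : G := PresentedGroup.of 0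
def b : G := PresentedGroup.of 1

/-- `c = [b,a] = b·a·b⁻¹·a⁻¹`. -/
def c : G := b * a * b⁻¹ * a⁻¹

end Stmt10

open scoped commutatorElement

theorem commute_conj_of_pow_three {G : Type*} [Group G] {x y : G} (hy : y ^ 3 = 1)
    (hxy : (x * y) ^ 3 = 1) (hxy' : (x⁻¹ * y) ^ 3 = 1) : Commute (y * x * y⁻¹) x := by
  set u := y * x * y⁻¹
  set v := y * y * x * y⁻¹ * y⁻¹
  have hv : v = (x * u)⁻¹ := by
    refine eq_inv_of_mul_eq_one_right ?_
    calc x * u * v = (x * y) ^ 3 * (y ^ 3)⁻¹ := by simp only [u, v, pow_three]; group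
      _ = 1 := by rw [hxy, hy, inv_one, one_mul]
  have hv' : v⁻¹ = (x⁻¹ * u⁻¹)⁻¹ := by
    refine eq_inv_of_mul_eq_one_right ?_
    calc x⁻¹ * u⁻¹ * v⁻¹ = (x⁻¹ * y) ^ 3 * (y ^ 3)⁻¹ := by simp only [u, v, pow_three]; group
      _ = 1 := by rw [hxy', hy, inv_one, one_mul]
  rw [inv_inj, hv, mul_inv_rev] at hv'
  exact Commute.inv_inv_iff.mp hv'

section CentralCommutator

variable {G : Type*} [Group G] {x y : G}

theorem semiconjBy_zpow_zpow_commutatorElement_zpow_mul (hx : Commute ⁅y, x⁆ x)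
    (hy : Commute ⁅y, x⁆ y) (i j : ℤ) : SemiconjBy (y ^ j) (x ^ i) (⁅y, x⁆ ^ (j * i) * x ^ i) := by
  have hxy : SemiconjBy x y (⁅y, x⁆⁻¹ * y) := by
    rw [SemiconjBy, commutatorElement_def]; group
  have hxyj : x * y ^ j = (⁅y, x⁆⁻¹) ^ j * y ^ j * x := by
    rw [← hy.inv_left.mul_zpow]; exact (hxy.zpow_right j).eq
  have hyjx : SemiconjBy (y ^ j) x (⁅y, x⁆ ^ j * x) := by
    rw [SemiconjBy, mul_assoc, hxyj, inv_zpow', ← mul_assoc, ← mul_assoc, ← zpow_add]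
    simp
  rw [zpow_mul, ← (hx.zpow_left j).mul_zpow]
  exact hyjx.zpow_right i

theorem zpow_eq_one_of_orderOf_dvd {x z : G} {i : ℤ} (h : orderOf x ∣ orderOf z) (hz : z ^ i = 1) :
    x ^ i = 1 :=
  orderOf_dvd_iff_zpow_eq_one.mp <|
    (Int.natCast_dvd_natCast.mpr h).trans (orderOf_dvd_iff_zpow_eq_one.mpr hz)

theorem commutatorElement_pow_eq_one (hx : Commute ⁅y, x⁆ x) (hy : Commute ⁅y, x⁆ y) {n : ℕ}
    (hn : x ^ n = 1) : ⁅y, x⁆ ^ n = 1 := by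
  have h := (semiconjBy_zpow_zpow_commutatorElement_zpow_mul hx hy n 1).eq
  simpa [hn] using h

theorem commutatorElement_zpow_eq_one_of_commute (hx : Commute ⁅y, x⁆ x) (hy : Commute ⁅y, x⁆ y)
    {i j : ℤ} (h : Commute (y ^ j) (x ^ i)) : ⁅y, x⁆ ^ (j * i) = 1 := by
  have h' := (semiconjBy_zpow_zpow_commutatorElement_zpow_mul hx hy i j).eq
  rw [h.eq, mul_assoc] at h'
  exact mul_eq_right.mp h'.symm

theorem exists_eq_commutatorElement_zpow_mul_zpow_mul_zpow (hx : Commute ⁅y, x⁆ x)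
    (hy : Commute ⁅y, x⁆ y) (hgen : Subgroup.closure {x, y} = ⊤) (g : G) :
    ∃ k i j : ℤ, g = ⁅y, x⁆ ^ k * x ^ i * y ^ j := by
  have x_zpow_mul (e k i j : ℤ) : x ^ e * (⁅y, x⁆ ^ k * x ^ i * y ^ j) =
      ⁅y, x⁆ ^ k * x ^ (e + i) * y ^ j := by
    rw [← mul_assoc, ← mul_assoc, ((hx.zpow_zpow k e).symm).eq, mul_assoc _ (x ^ e), ← zpow_add]
  have y_zpow_mul (e k i j : ℤ) : y ^ e * (⁅y, x⁆ ^ k * x ^ i * y ^ j) =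
      ⁅y, x⁆ ^ (k + e * i) * x ^ i * y ^ (e + j) := by
    rw [mul_assoc, ← mul_assoc, ← mul_assoc, ((hy.zpow_zpow k e).symm).eq, mul_assoc _ (y ^ e),
      (semiconjBy_zpow_zpow_commutatorElement_zpow_mul hx hy i e).eq, zpow_add, zpow_add]
    group
  induction (hgen ▸ Subgroup.mem_top g : g ∈ Subgroup.closure {x, y})
    using Subgroup.closure_induction_left with
  | one => exact ⟨0, 0, 0, by simp⟩
  | mul_left s hs g _ ih =>
    obtain ⟨k, i, j, rfl⟩ := ih
    rcases hs with rfl | rfl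
    · exact ⟨k, 1 + i, j, by rw [← x_zpow_mul, zpow_one]⟩
    · exact ⟨k + 1 * i, i, 1 + j, by rw [← y_zpow_mul, zpow_one]⟩
  | inv_mul_cancel s hs g _ ih =>
    obtain ⟨k, i, j, rfl⟩ := ih
    rcases hs with rfl | rfl
    · exact ⟨k, -1 + i, j, by rw [← x_zpow_mul, zpow_neg_one]⟩
    · exact ⟨k + -1 * i, i, -1 + j, by rw [← y_zpow_mul, zpow_neg_one]⟩

theorem commutatorElement_mem_center (hx : Commute ⁅y, x⁆ x) (hy : Commute ⁅y, x⁆ y)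
    (hgen : Subgroup.closure {x, y} = ⊤) : ⁅y, x⁆ ∈ Subgroup.center G := by
  refine Subgroup.mem_center_iff.mpr fun g => ?_
  obtain ⟨k, i, j, rfl⟩ := exists_eq_commutatorElement_zpow_mul_zpow_mul_zpow hx hy hgen g
  exact ((((Commute.refl _).zpow_right k).mul_right (hx.zpow_right i)).mul_right
    (hy.zpow_right j)).eq.symm

theorem center_eq_zpowers_commutatorElement (hx : Commute ⁅y, x⁆ x) (hy : Commute ⁅y, x⁆ y)
    (hgen : Subgroup.closure {x, y} = ⊤) (hxz : orderOf x ∣ orderOf ⁅y, x⁆)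
    (hyz : orderOf y ∣ orderOf ⁅y, x⁆) : Subgroup.center G = Subgroup.zpowers ⁅y, x⁆ := by
  refine le_antisymm (fun g hg => ?_)
    (Subgroup.zpowers_le.mpr (commutatorElement_mem_center hx hy hgen))
  obtain ⟨k, i, j, rfl⟩ := exists_eq_commutatorElement_zpow_mul_zpow_mul_zpow hx hy hgen g
  have hgx : Commute x _ := Subgroup.mem_center_iff.mp hg x
  have hgy : Commute y _ := Subgroup.mem_center_iff.mp hg y
  have hyj_comm : Commute (y ^ j) (x ^ (1 : ℤ)) := by
    have : Commute (⁅y, x⁆ ^ k * x ^ i) x := (hx.zpow_left k).mul_left (Commute.zpow_self x i)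
    simpa only [inv_mul_cancel_left, zpow_one] using this.inv_left.mul_left hgx.symm
  have hxi_comm : Commute (y ^ (1 : ℤ)) (x ^ i) := by
    have : Commute (⁅y, x⁆ ^ k * x ^ i) y := by
      simpa only [mul_inv_cancel_right] using hgy.symm.mul_left (Commute.zpow_self y j).inv_left
    simpa only [inv_mul_cancel_left, zpow_one] using ((hy.zpow_left k).inv_left.mul_left this).symm
  have hxi : x ^ i = 1 := zpow_eq_one_of_orderOf_dvd hxz <| by
    simpa using commutatorElement_zpow_eq_one_of_commute hx hy hxi_comm
  have hyj : y ^ j = 1 := zpow_eq_one_of_orderOf_dvd hyz <| by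
    simpa using commutatorElement_zpow_eq_one_of_commute hx hy hyj_comm
  rw [hxi, hyj, mul_one, mul_one]
  exact Subgroup.zpow_mem_zpowers _ k

end CentralCommutator

/-- `(p, q, r)` stands for the matrix `!![1, p, r; 0, 1, q; 0, 0, 1]`. -/
def Heisenberg_s10 (R : Type*) : Type _ := R × R × R

namespace Heisenberg_s10

variable {R : Type*} [CommRing R]

instance inst_s10 : One (Heisenberg_s10 R) := ⟨((0 : R), (0 : R), (0 : R))⟩

instance inst_s10_2 : Mul (Heisenberg_s10 R) :=
  ⟨fun g h => (g.1 + h.1, g.2.1 + h.2.1, g.2.2 + h.2.2 + g.1 * h.2.1)⟩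

instance inst_s10_3 : Inv (Heisenberg_s10 R) := ⟨fun g => (-g.1, -g.2.1, -g.2.2 + g.1 * g.2.1)⟩

instance : Group (Heisenberg_s10 R) := Group.ofLeftAxioms
  (fun g h k => Prod.ext (add_assoc _ _ _) (Prod.ext (add_assoc _ _ _)
    (show g.2.2 + h.2.2 + g.1 * h.2.1 + k.2.2 + (g.1 + h.1) * k.2.1 =
      g.2.2 + (h.2.2 + k.2.2 + h.1 * k.2.1) + g.1 * (h.2.1 + k.2.1) by ring)))
  (fun g => Prod.ext (zero_add _) (Prod.ext (zero_add _)
    (show 0 + g.2.2 + 0 * g.2.1 = g.2.2 by ring)))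
  (fun g => Prod.ext (neg_add_cancel _) (Prod.ext (neg_add_cancel _)
    (show -g.2.2 + g.1 * g.2.1 + g.2.2 + -g.1 * g.2.1 = 0 by ring)))

instance [DecidableEq R] : DecidableEq (Heisenberg_s10 R) := inferInstanceAs (DecidableEq (R × R × R))

end Heisenberg_s10

namespace Stmt10

open PresentedGroup

theorem a_pow_three : a ^ 3 = 1 := one_of_mem (rels := rels) (x := ra ^ 3) (by simp [rels])

theorem b_pow_three : b ^ 3 = 1 := one_of_mem (rels := rels) (x := rb ^ 3) (by simp [rels])

theorem a_mul_b_pow_three : (a * b) ^ 3 = 1 :=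
  one_of_mem (rels := rels) (x := (ra * rb) ^ 3) (by simp [rels])

theorem a_inv_mul_b_pow_three : (a⁻¹ * b) ^ 3 = 1 :=
  one_of_mem (rels := rels) (x := (ra⁻¹ * rb) ^ 3) (by simp [rels])

theorem closure_a_b_eq_top : Subgroup.closure {a, b} = ⊤ := by
  rw [← closure_range_of rels]
  congr
  ext g
  simp [Fin.exists_fin_two, a, b, eq_comm]

def toHeisenberg : G →* Heisenberg_s10 (ZMod 3) :=
  toGroup (f := (![(1, 0, 0), (0, 1, 0)] : Fin 2 → Heisenberg_s10 (ZMod 3))) <| by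
    simp only [rels, Set.mem_insert_iff, Set.mem_singleton_iff]
    rintro r (rfl | rfl | rfl | rfl) <;> decide

theorem c_ne_one : c ≠ 1 := by
  intro h
  have := congrArg toHeisenberg h
  rw [map_one, c, ← commutatorElement_def, map_commutatorElement, toHeisenberg, a, b,
    toGroup.of, toGroup.of] at this
  revert this
  decide

theorem commute_conj_b_a : Commute (b * a * b⁻¹) a :=
  commute_conj_of_pow_three b_pow_three a_mul_b_pow_three a_inv_mul_b_pow_three

theorem commute_conj_a_b : Commute (a * b * a⁻¹) b := by
  refine commute_conj_of_pow_three a_pow_three ?_ ?_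
  · calc (b * a) ^ 3 = a⁻¹ * (a * b) ^ 3 * a := by simp only [pow_three]; group
      _ = 1 := by rw [a_mul_b_pow_three]; group
  · calc (b⁻¹ * a) ^ 3 = ((a⁻¹ * b) ^ 3)⁻¹ := by simp only [pow_three]; group
      _ = 1 := by rw [a_inv_mul_b_pow_three, inv_one]

theorem commute_c_a : Commute c a :=
  commute_conj_b_a.mul_left (Commute.refl a).inv_left

theorem commute_c_b : Commute c b := by
  rw [show c = b * (a * b * a⁻¹)⁻¹ by rw [c]; group]
  exact (Commute.refl b).mul_left commute_conj_a_b.inv_left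

theorem c_pow_three : c ^ 3 = 1 :=
  commutatorElement_pow_eq_one commute_c_a commute_c_b a_pow_three

theorem orderOf_c : orderOf c = 3 := orderOf_eq_prime c_pow_three c_ne_one

theorem properties_of_c :
    c ^ 3 = 1 ∧ Subgroup.center G = Subgroup.zpowers c ∧
    Commute (b * a * b⁻¹) a ∧ Commute (a * b * a⁻¹) b := by
  refine ⟨c_pow_three, ?_, commute_conj_b_a, commute_conj_a_b⟩
  exact center_eq_zpowers_commutatorElement commute_c_a commute_c_b closure_a_b_eq_top
    (orderOf_c ▸ orderOf_dvd_of_pow_eq_one a_pow_three)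
    (orderOf_c ▸ orderOf_dvd_of_pow_eq_one b_pow_three)

end Stmt10
end

section
/- The Schur multiplier H²(G, ℂˣ) of the Heisenberg group over ℤ/3ℤ (the nonabelian group of order 27 and exponent 3) is isomorphic to ℤ/3ℤ × ℤ/3ℤ. -/
/-- The Heisenberg group over a commutative ring `R`: triples `(x, y, z)`
corresponding to the upper unitriangular matrices `![![1, x, z], ![0, 1, y], ![0, 0, 1]]`,
with multiplication given by matrix multiplication. -/
@[ext]
structure Heisenberg (R : Type*) [CommRing R] where
  x : R
  y : R
  z : R

namespace Heisenberg

variable {R : Type*} [CommRing R]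

instance : Mul (Heisenberg R) :=
  ⟨fun a b => ⟨a.x + b.x, a.y + b.y, a.z + b.z + a.x * b.y⟩⟩

instance : One (Heisenberg R) := ⟨⟨0, 0, 0⟩⟩

instance : Inv (Heisenberg R) := ⟨fun a => ⟨-a.x, -a.y, a.x * a.y - a.z⟩⟩

@[simp] theorem mul_x (a b : Heisenberg R) : (a * b).x = a.x + b.x := rfl
@[simp] theorem mul_y (a b : Heisenberg R) : (a * b).y = a.y + b.y := rfl
@[simp] theorem mul_z (a b : Heisenberg R) : (a * b).z = a.z + b.z + a.x * b.y := rfl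
@[simp] theorem one_x : (1 : Heisenberg R).x = 0 := rfl
@[simp] theorem one_y : (1 : Heisenberg R).y = 0 := rfl
@[simp] theorem one_z : (1 : Heisenberg R).z = 0 := rfl
@[simp] theorem inv_x (a : Heisenberg R) : a⁻¹.x = -a.x := rfl
@[simp] theorem inv_y (a : Heisenberg R) : a⁻¹.y = -a.y := rfl
@[simp] theorem inv_z (a : Heisenberg R) : a⁻¹.z = a.x * a.y - a.z := rfl

instance instGroup : Group (Heisenberg R) where
  mul_assoc a b c := by ext <;> simp <;> ring
  one_mul a := by ext <;> simp
  mul_one a := by ext <;> simp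
  inv_mul_cancel a := by ext <;> simp

/-- The triple `(x,y,z)` corresponds to the matrix `![![1,x,z],![0,1,y],![0,0,1]]`,
and multiplication is matrix multiplication (in the `(x, y, z)` coordinates). -/
theorem mul_def (a b : Heisenberg R) :
    a * b = ⟨a.x + b.x, a.y + b.y, a.z + b.z + a.x * b.y⟩ := rfl

end Heisenberg

/-!
A 2-cocycle `F` defines a central extension `E` of `G = H(ℤ/n)` by `ℂˣ`. For commuting `g, k`,
the commutator of lifts of `g` and `k` in `E` is `F(g, k) / F(k, g)`; hence this quotient is
multiplicative in `g`, trivial on coboundaries, and an `n`-th root of unity when `gⁿ = 1`.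
Pairing the central generator `z` with `x` and with `y` gives a homomorphism from cocycles to
`μₙ × μₙ`. If both pairings vanish, choose lifts `A`, `B` of `x`, `y` of order `n` (possible since
`ℂ` is algebraically closed); their commutator `C` lifts `z` and commutes with `A` and `B`, so
`(x, y, z) ↦ C^z B^y A^x` is a homomorphic section of `E → G` and `F` is a coboundary. For odd `n`
the homomorphism is onto, as explicit cocycles built from `x z'` and `z y'` show.
-/

open scoped commutatorElement

theorem pow_eq_pow_of_natCast_eq {M : Type*} [Monoid M] {n m k : ℕ} {x : M} (hx : x ^ n = 1)
    (h : (m : ZMod n) = k) : x ^ m = x ^ k := by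
  rw [pow_eq_pow_mod m hx, pow_eq_pow_mod k hx, (ZMod.natCast_eq_natCast_iff' m k n).mp h]

theorem IsAlgClosed.exists_units_pow_eq {k : Type*} [Field k] [IsAlgClosed k] (x : kˣ) {n : ℕ}
    (hn : n ≠ 0) : ∃ r : kˣ, r ^ n = x := by
  obtain ⟨z, hz⟩ := IsAlgClosed.exists_pow_nat_eq (x : k) (Nat.pos_of_ne_zero hn)
  have hz0 : z ≠ 0 := by
    rintro rfl
    exact x.ne_zero (by rw [← hz, zero_pow hn])
  exact ⟨Units.mk0 z hz0, Units.ext (by simpa using hz)⟩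

section CentralCommutator

variable {Γ : Type*} [Group Γ] {A B C : Γ}

theorem pow_mul_pow_eq_of_mul_eq (hCA : Commute C A) (hCB : Commute C B)
    (hAB : A * B = C * (B * A)) (m k : ℕ) : A ^ m * B ^ k = C ^ (m * k) * (B ^ k * A ^ m) := by
  have hconj : ∀ m : ℕ, SemiconjBy (A ^ m) B (C ^ m * B) := by
    intro m
    induction m with
    | zero => simp [SemiconjBy]
    | succ m ih =>
      have hA : SemiconjBy A B (C * B) := by rw [SemiconjBy, hAB, mul_assoc]
      rw [pow_succ' A, pow_succ C, mul_assoc]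
      exact (SemiconjBy.mul_right (hCA.symm.pow_right m) hA).mul_left ih
  rw [(hconj m).pow_right k, (hCB.pow_left m).mul_pow, ← pow_mul, mul_assoc]

theorem pow_eq_one_of_mul_eq (hCA : Commute C A) (hCB : Commute C B)
    (hAB : A * B = C * (B * A)) {n : ℕ} (hA : A ^ n = 1) : C ^ n = 1 := by
  simpa [hA] using pow_mul_pow_eq_of_mul_eq hCA hCB hAB n 1

end CentralCommutator

theorem mul_mul_eq_of_mul_eq {E : Type*} [Group E] {p p' q u u' : E} (hu' : Commute u' p)
    (h : p * q = u * (q * p)) (h' : p' * q = u' * (q * p')) :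
    p * p' * q = u' * u * (q * (p * p')) := by
  rw [mul_assoc, h', ← mul_assoc, ← hu'.eq, mul_assoc, ← mul_assoc p, h]
  group

namespace Heisenberg

section Generators

variable {R : Type*} [CommRing R]

def genX : Heisenberg R := ⟨1, 0, 0⟩
def genY : Heisenberg R := ⟨0, 1, 0⟩
def genZ : Heisenberg R := ⟨0, 0, 1⟩

theorem genX_pow (m : ℕ) : (genX : Heisenberg R) ^ m = ⟨m, 0, 0⟩ := by
  induction m with
  | zero => ext <;> simp
  | succ m ih => rw [pow_succ, ih]; ext <;> simp [genX]

theorem genY_pow (m : ℕ) : (genY : Heisenberg R) ^ m = ⟨0, m, 0⟩ := by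
  induction m with
  | zero => ext <;> simp
  | succ m ih => rw [pow_succ, ih]; ext <;> simp [genY]

theorem genZ_pow (m : ℕ) : (genZ : Heisenberg R) ^ m = ⟨0, 0, m⟩ := by
  induction m with
  | zero => ext <;> simp
  | succ m ih => rw [pow_succ, ih]; ext <;> simp [genZ]

theorem commute_genZ (g : Heisenberg R) : Commute g genZ := by
  ext <;> simp [genZ, add_comm]

theorem commutatorElement_genX_genY : ⁅(genX : Heisenberg R), (genY : Heisenberg R)⁆ = genZ := by
  ext <;> simp [commutatorElement_def, genX, genY, genZ]

end Generators

theorem genX_pow_card {n : ℕ} : (genX : Heisenberg (ZMod n)) ^ n = 1 := by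
  rw [genX_pow, ZMod.natCast_self]
  rfl

theorem genY_pow_card {n : ℕ} : (genY : Heisenberg (ZMod n)) ^ n = 1 := by
  rw [genY_pow, ZMod.natCast_self]
  rfl

theorem genZ_pow_mul_genY_pow_mul_genX_pow {n : ℕ} [NeZero n] (g : Heisenberg (ZMod n)) :
    genZ ^ g.z.val * genY ^ g.y.val * genX ^ g.x.val = g := by
  ext <;> simp [genX_pow, genY_pow, genZ_pow]

section Lift

variable {Γ : Type*} [Group Γ] {A B C : Γ} {n : ℕ} [NeZero n]

def lift (hCA : Commute C A) (hCB : Commute C B) (hAB : A * B = C * (B * A)) (hA : A ^ n = 1)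
    (hB : B ^ n = 1) : Heisenberg (ZMod n) →* Γ where
  toFun g := C ^ g.z.val * B ^ g.y.val * A ^ g.x.val
  map_one' := by simp
  map_mul' g h := by
    have hC := pow_eq_one_of_mul_eq hCA hCB hAB hA
    have hCyx (k : ℕ) : Commute (C ^ k) (B ^ g.y.val * A ^ g.x.val) :=
      (hCB.pow_pow k _).mul_right (hCA.pow_pow k _)
    symm
    calc C ^ g.z.val * B ^ g.y.val * A ^ g.x.val * (C ^ h.z.val * B ^ h.y.val * A ^ h.x.val)
        = C ^ g.z.val * ((B ^ g.y.val * A ^ g.x.val) * C ^ h.z.val) * B ^ h.y.val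
            * A ^ h.x.val := by group
      _ = C ^ g.z.val * C ^ h.z.val * B ^ g.y.val * (A ^ g.x.val * B ^ h.y.val)
            * A ^ h.x.val := by rw [← (hCyx _).eq]; group
      _ = C ^ g.z.val * C ^ h.z.val * (B ^ g.y.val * C ^ (g.x.val * h.y.val)) * B ^ h.y.val
            * (A ^ g.x.val * A ^ h.x.val) := by rw [pow_mul_pow_eq_of_mul_eq hCA hCB hAB]; group
      _ = C ^ (g.z.val + h.z.val + g.x.val * h.y.val) * B ^ (g.y.val + h.y.val)
            * A ^ (g.x.val + h.x.val) := by rw [← (hCB.pow_pow _ _).eq]; group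
      _ = C ^ (g * h).z.val * B ^ (g * h).y.val * A ^ (g * h).x.val := by
          rw [pow_eq_pow_of_natCast_eq hC (k := (g * h).z.val) (by simp),
            pow_eq_pow_of_natCast_eq hB (k := (g * h).y.val) (by simp),
            pow_eq_pow_of_natCast_eq hA (k := (g * h).x.val) (by simp)]

theorem lift_apply (hCA : Commute C A) (hCB : Commute C B) (hAB : A * B = C * (B * A))
    (hA : A ^ n = 1) (hB : B ^ n = 1) (g : Heisenberg (ZMod n)) :
    lift hCA hCB hAB hA hB g = C ^ g.z.val * B ^ g.y.val * A ^ g.x.val := rfl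

end Lift

end Heisenberg

section Cocycles

variable {G : Type*}

def cocycleCommutator (f : G → G → ℂˣ) (g h : G) : ℂˣ := f g h / f h g

theorem cocycleCommutator_swap (f : G → G → ℂˣ) (g h : G) :
    cocycleCommutator f h g = (cocycleCommutator f g h)⁻¹ :=
  (inv_div _ _).symm

theorem cocycleCommutator_mul (f f' : G → G → ℂˣ) (g h : G) :
    cocycleCommutator (f * f') g h = cocycleCommutator f g h * cocycleCommutator f' g h :=
  mul_div_mul_comm _ _ _ _

variable [Group G]

instance : CoeFun (twoCocycles G) (fun _ => G → G → ℂˣ) := ⟨Subtype.val⟩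

namespace twoCocycles

theorem map_one_left (F : twoCocycles G) (g : G) : F 1 g = F 1 1 := by
  simpa using (F.2 1 1 g).symm

theorem map_one_right (F : twoCocycles G) (g : G) : F g 1 = F 1 1 := by
  simpa using F.2 g 1 1

end twoCocycles

theorem cocycleCommutator_one_left (F : twoCocycles G) (g : G) : cocycleCommutator F 1 g = 1 := by
  rw [cocycleCommutator, twoCocycles.map_one_left, twoCocycles.map_one_right F g, div_self']

theorem cocycleCommutator_eq_one_of_mem_twoCoboundaries {f : G → G → ℂˣ}
    (hf : f ∈ twoCoboundaries G) {g h : G} (hgh : Commute g h) : cocycleCommutator f g h = 1 := by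
  obtain ⟨c, hc⟩ := hf
  rw [cocycleCommutator, hc, hc, hgh.eq, mul_comm (c g), div_self']

@[ext]
structure CocycleExtension (F : twoCocycles G) where
  scalar : ℂˣ
  base : G

namespace CocycleExtension

variable {F : twoCocycles G}

instance : Mul (CocycleExtension F) :=
  ⟨fun p q => ⟨p.scalar * q.scalar * F p.base q.base, p.base * q.base⟩⟩

instance : One (CocycleExtension F) := ⟨⟨(F 1 1)⁻¹, 1⟩⟩

instance : Inv (CocycleExtension F) :=
  ⟨fun p => ⟨(p.scalar * F p.base⁻¹ p.base * F 1 1)⁻¹, p.base⁻¹⟩⟩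

@[simp] theorem mul_scalar (p q : CocycleExtension F) :
    (p * q).scalar = p.scalar * q.scalar * F p.base q.base := rfl
@[simp] theorem mul_base (p q : CocycleExtension F) : (p * q).base = p.base * q.base := rfl
@[simp] theorem one_scalar : (1 : CocycleExtension F).scalar = (F 1 1)⁻¹ := rfl
@[simp] theorem one_base : (1 : CocycleExtension F).base = 1 := rfl
@[simp] theorem inv_scalar (p : CocycleExtension F) :
    p⁻¹.scalar = (p.scalar * F p.base⁻¹ p.base * F 1 1)⁻¹ := rfl
@[simp] theorem inv_base (p : CocycleExtension F) : p⁻¹.base = p.base⁻¹ := rfl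

instance : Group (CocycleExtension F) := Group.ofLeftAxioms
  (fun p q r => by
    ext : 1
    · calc p.scalar * q.scalar * F p.base q.base * r.scalar * F (p.base * q.base) r.base
          = p.scalar * q.scalar * r.scalar * (F p.base q.base * F (p.base * q.base) r.base) := by
            ac_rfl
        _ = p.scalar * (q.scalar * r.scalar * F q.base r.base) * F p.base (q.base * r.base) := by
            rw [F.2 p.base q.base r.base]; ac_rfl
    · exact mul_assoc _ _ _)
  (fun p => by ext <;> simp [twoCocycles.map_one_left])
  (fun p => by
    ext <;> simp
    field_simp)

def proj : CocycleExtension F →* G where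
  toFun := base
  map_one' := rfl
  map_mul' _ _ := rfl

def incl : ℂˣ →* CocycleExtension F where
  toFun u := ⟨u * (F 1 1)⁻¹, 1⟩
  map_one' := by ext <;> simp
  map_mul' u v := by
    ext <;> simp
    field_simp

@[simp] theorem proj_apply (p : CocycleExtension F) : proj p = p.base := rfl

theorem incl_mul (u : ℂˣ) (p : CocycleExtension F) : incl u * p = ⟨u * p.scalar, p.base⟩ := by
  ext : 1
  · simp only [incl, MonoidHom.coe_mk, OneHom.coe_mk, mul_scalar, twoCocycles.map_one_left]
    rw [mul_right_comm _ _ p.scalar, inv_mul_cancel_right]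
  · exact one_mul _

theorem commute_incl (u : ℂˣ) (p : CocycleExtension F) : Commute (incl u) p := by
  rw [Commute, SemiconjBy, incl_mul]
  ext : 1
  · simp only [incl, MonoidHom.coe_mk, OneHom.coe_mk, mul_scalar, twoCocycles.map_one_right]
    rw [← mul_assoc, inv_mul_cancel_right, mul_comm]
  · exact (mul_one _).symm

theorem incl_injective : Function.Injective (incl : ℂˣ →* CocycleExtension F) :=
  fun u v h => by simpa [incl] using congrArg scalar h

theorem eq_incl_of_base_eq_one {p : CocycleExtension F} (hp : p.base = 1) :
    p = incl (p.scalar * F 1 1) := by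
  ext : 1
  · simp [incl]
  · simp [incl, hp]

theorem mul_eq_incl_mul_of_commute {p q : CocycleExtension F} (h : Commute p.base q.base) :
    p * q = incl (cocycleCommutator F p.base q.base) * (q * p) := by
  rw [incl_mul]
  ext : 1
  · simp [cocycleCommutator, mul_comm]
  · exact h.eq

theorem commute_of_cocycleCommutator_eq_one {p q : CocycleExtension F} (h : Commute p.base q.base)
    (hc : cocycleCommutator F p.base q.base = 1) : Commute p q := by
  rw [Commute, SemiconjBy, mul_eq_incl_mul_of_commute h, hc, map_one, one_mul]

end CocycleExtension

open CocycleExtension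

theorem cocycleCommutator_mul_left (F : twoCocycles G) {g h k : G} (hgk : Commute g k)
    (hhk : Commute h k) :
    cocycleCommutator F (g * h) k = cocycleCommutator F g k * cocycleCommutator F h k := by
  have key := mul_mul_eq_of_mul_eq (commute_incl _ _)
    (mul_eq_incl_mul_of_commute (F := F) (p := ⟨1, g⟩) (q := ⟨1, k⟩) hgk)
    (mul_eq_incl_mul_of_commute (F := F) (p := ⟨1, h⟩) (q := ⟨1, k⟩) hhk)
  rw [mul_eq_incl_mul_of_commute (hgk.mul_left hhk), ← map_mul, mul_comm] at key
  exact incl_injective (mul_right_cancel key)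

theorem cocycleCommutator_pow_left (F : twoCocycles G) {g k : G} (hgk : Commute g k) (m : ℕ) :
    cocycleCommutator F (g ^ m) k = cocycleCommutator F g k ^ m := by
  induction m with
  | zero => simpa using cocycleCommutator_one_left F k
  | succ m ih => rw [pow_succ, cocycleCommutator_mul_left F (hgk.pow_left m) hgk, ih, pow_succ]

def cocycleCommutatorHom {g k : G} (hgk : Commute g k) {n : ℕ} (hg : g ^ n = 1) :
    twoCocycles G →* rootsOfUnity n ℂ where
  toFun F := ⟨cocycleCommutator F g k, by
    rw [mem_rootsOfUnity, ← cocycleCommutator_pow_left F hgk, hg, cocycleCommutator_one_left]⟩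
  map_one' := Subtype.ext (div_self' _)
  map_mul' F F' := Subtype.ext (cocycleCommutator_mul F F' g k)

theorem mem_twoCoboundaries_of_section (F : twoCocycles G) (σ : G →* CocycleExtension F)
    (hσ : ∀ g, (σ g).base = g) : (F : G → G → ℂˣ) ∈ twoCoboundaries G := by
  refine ⟨fun g => (σ g).scalar⁻¹, fun g h => ?_⟩
  have hs : (σ (g * h)).scalar = (σ g).scalar * (σ h).scalar * F g h := by
    rw [map_mul, mul_scalar, hσ, hσ]
  rw [inv_inv, hs, ← mul_inv, inv_mul_cancel_left]

theorem exists_lift_pow_eq_one (F : twoCocycles G) {n : ℕ} (hn : n ≠ 0) {g : G}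
    (hg : g ^ n = 1) : ∃ p : CocycleExtension F, p.base = g ∧ p ^ n = 1 := by
  let p₀ : CocycleExtension F := ⟨1, g⟩
  obtain ⟨t, ht⟩ : ∃ t, p₀ ^ n = incl t :=
    ⟨_, eq_incl_of_base_eq_one (by rw [← proj_apply, map_pow]; exact hg)⟩
  obtain ⟨r, hr⟩ := IsAlgClosed.exists_units_pow_eq t⁻¹ hn
  refine ⟨incl r * p₀, by rw [incl_mul], ?_⟩
  rw [(commute_incl r p₀).mul_pow, ← map_pow, hr, ht, ← map_mul, inv_mul_cancel, map_one]

end Cocycles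

theorem mem_twoCocycles_of_additive {G A : Type*} [Group G] [AddMonoid A]
    (χ : Multiplicative A →* ℂˣ) {e : G → G → A}
    (he : ∀ g h k, e g h + e (g * h) k = e g (h * k) + e h k) :
    (fun g h => χ (.ofAdd (e g h))) ∈ twoCocycles G := fun g h k => by
  simp only [← map_mul, ← ofAdd_add, he]

theorem cocycleCommutator_of_additive {G A : Type*} [AddGroup A] (χ : Multiplicative A →* ℂˣ)
    (e : G → G → A) (g h : G) :
    cocycleCommutator (fun g h => χ (.ofAdd (e g h))) g h = χ (.ofAdd (e g h - e h g)) := by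
  rw [cocycleCommutator, ofAdd_sub, map_div]

noncomputable def zmodMulEquivRootsOfUnity (n : ℕ) [NeZero n] :
    Multiplicative (ZMod n) ≃* rootsOfUnity n ℂ :=
  mulEquivOfCyclicCardEq ((Nat.card_zmod n).trans (Complex.card_rootsOfUnity n).symm)

namespace Heisenberg

section AddCocycle

variable {R : Type*} [CommRing R]

-- On `(x, y, z), (x', y', z'), (x'', y'', z'')`, the functions `x z'` and `z y'` fail the
-- cocycle identity by `-x x' y''` and `x y' y''`; with `2u = 1` the terms `u x² y'` and `u x y'²`
-- repair this.
def addCocycle (s t u : R) (g h : Heisenberg R) : R :=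
  s * (g.x * h.z + u * g.x ^ 2 * h.y) - t * (g.z * h.y + u * g.x * h.y ^ 2)

theorem addCocycle_add_addCocycle_mul (s t : R) {u : R} (hu : 2 * u = 1) (g h k : Heisenberg R) :
    addCocycle s t u g h + addCocycle s t u (g * h) k
      = addCocycle s t u g (h * k) + addCocycle s t u h k := by
  simp only [addCocycle, mul_x, mul_y, mul_z]
  linear_combination (s * g.x * h.x * k.y + t * g.x * h.y * k.y) * hu

theorem addCocycle_genX_genZ_sub (s t u : R) :
    addCocycle s t u genX genZ - addCocycle s t u genZ genX = s := by
  simp [addCocycle, genX, genZ]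

theorem addCocycle_genY_genZ_sub (s t u : R) :
    addCocycle s t u genY genZ - addCocycle s t u genZ genY = t := by
  simp [addCocycle, genY, genZ]

end AddCocycle

open CocycleExtension

variable {n : ℕ} [NeZero n]

theorem mem_twoCoboundaries_of_cocycleCommutator_eq_one (F : twoCocycles (Heisenberg (ZMod n)))
    (hX : cocycleCommutator F genX genZ = 1) (hY : cocycleCommutator F genY genZ = 1) :
    (F : Heisenberg (ZMod n) → Heisenberg (ZMod n) → ℂˣ) ∈ twoCoboundaries _ := by
  obtain ⟨A, hAbase, hA⟩ := exists_lift_pow_eq_one F (NeZero.ne n) genX_pow_card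
  obtain ⟨B, hBbase, hB⟩ := exists_lift_pow_eq_one F (NeZero.ne n) genY_pow_card
  have hCbase : ⁅A, B⁆.base = genZ := by
    rw [← proj_apply, map_commutatorElement, proj_apply, proj_apply, hAbase, hBbase,
      commutatorElement_genX_genY]
  have hCA : Commute ⁅A, B⁆ A := commute_of_cocycleCommutator_eq_one
    (by rw [hCbase, hAbase]; exact (commute_genZ genX).symm)
    (by rw [hCbase, hAbase, cocycleCommutator_swap, hX, inv_one])
  have hCB : Commute ⁅A, B⁆ B := commute_of_cocycleCommutator_eq_one
    (by rw [hCbase, hBbase]; exact (commute_genZ genY).symm)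
    (by rw [hCbase, hBbase, cocycleCommutator_swap, hY, inv_one])
  have hAB : A * B = ⁅A, B⁆ * (B * A) := by
    rw [commutatorElement_def]
    group
  refine mem_twoCoboundaries_of_section F (lift hCA hCB hAB hA hB) fun g => ?_
  rw [← proj_apply, lift_apply]
  simp only [map_mul, map_pow, proj_apply, hCbase, hAbase, hBbase]
  exact genZ_pow_mul_genY_pow_mul_genX_pow g

variable (n) in
def cocycleInvariant : twoCocycles (Heisenberg (ZMod n)) →* rootsOfUnity n ℂ × rootsOfUnity n ℂ :=
  (cocycleCommutatorHom (commute_genZ genX) genX_pow_card).prod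
    (cocycleCommutatorHom (commute_genZ genY) genY_pow_card)

theorem ker_cocycleInvariant :
    (cocycleInvariant n).ker = (twoCoboundaries _).subgroupOf (twoCocycles _) := by
  ext F
  rw [MonoidHom.mem_ker, Subgroup.mem_subgroupOf, cocycleInvariant, MonoidHom.prod_apply,
    Prod.mk_eq_one]
  constructor
  · rintro ⟨hX, hY⟩
    exact mem_twoCoboundaries_of_cocycleCommutator_eq_one F
      (congrArg Subtype.val hX) (congrArg Subtype.val hY)
  · intro hF
    exact ⟨Subtype.ext (cocycleCommutator_eq_one_of_mem_twoCoboundaries hF (commute_genZ _)),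
      Subtype.ext (cocycleCommutator_eq_one_of_mem_twoCoboundaries hF (commute_genZ _))⟩

theorem cocycleInvariant_surjective (hn : Odd n) : Function.Surjective (cocycleInvariant n) := by
  obtain ⟨u, hu⟩ : ∃ u : ZMod n, 2 * u = 1 := by
    simpa using ((ZMod.isUnit_iff_coprime 2 n).mpr (Nat.coprime_two_left.mpr hn)).exists_right_inv
  rintro ⟨ζ, ξ⟩
  obtain ⟨s, rfl⟩ := (zmodMulEquivRootsOfUnity n).surjective ζ
  obtain ⟨t, rfl⟩ := (zmodMulEquivRootsOfUnity n).surjective ξ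
  let χ : Multiplicative (ZMod n) →* ℂˣ :=
    (rootsOfUnity n ℂ).subtype.comp (zmodMulEquivRootsOfUnity n).toMonoidHom
  refine ⟨⟨_, mem_twoCocycles_of_additive χ (addCocycle_add_addCocycle_mul s.toAdd t.toAdd hu)⟩,
    Prod.ext (Subtype.ext ?_) (Subtype.ext ?_)⟩
  · exact (cocycleCommutator_of_additive χ _ genX genZ).trans
      (by rw [addCocycle_genX_genZ_sub]; rfl)
  · exact (cocycleCommutator_of_additive χ _ genY genZ).trans
      (by rw [addCocycle_genY_genZ_sub]; rfl)

variable (n) in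
noncomputable def schurMultiplierMulEquiv (hn : Odd n) :
    schurMultiplier (Heisenberg (ZMod n)) ≃* rootsOfUnity n ℂ × rootsOfUnity n ℂ :=
  (QuotientGroup.quotientMulEquivOfEq ker_cocycleInvariant.symm).trans
    (QuotientGroup.quotientKerEquivOfSurjective _ (cocycleInvariant_surjective hn))

end Heisenberg

theorem schurMultiplier_heisenberg :
    Nonempty (schurMultiplier (Heisenberg (ZMod 3)) ≃*
      Multiplicative (ZMod 3) × Multiplicative (ZMod 3)) :=
  ⟨(Heisenberg.schurMultiplierMulEquiv 3 (by decide)).trans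
    ((zmodMulEquivRootsOfUnity 3).symm.prodCongr (zmodMulEquivRootsOfUnity 3).symm)⟩
end
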